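/- Let q be an indeterminate, p ∈ {0,1}, and z another indeterminate. For every a ≥ 0, the identity ∏_{j=0}^{a-1} (1 + ((-1)^p q^2)^j z) = ∑_{t=0}^{a} (-1)^{p·t(t-1)/2} q^{t(a-1)} [a; t]_{q,p} z^t holds in ℚ(q)[z]. -/

import Mathlib

/-!
With `ε = (-1)^p` and `Q = ε q²`, every factor of the super binomial coefficient factors as
`(ε q)^m - q^(-m) = q^(-m) (Q^m - 1)`, so `[a; t]_{q,p} = q^(t(t-1) - t(a-1)) [a t]_Q` with the
ordinary Gaussian binomial coefficient `[a t]_Q`, and the prefactor turns into `Q^(t choose 2)`.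
The identity is then the `q`-binomial theorem `∏_{j<a} (1 + Q^j z) = ∑_t Q^(t choose 2) [a t]_Q z^t`,
proved by induction on `a` from the `q`-Pascal rule; its denominators `Q^k - 1` do not vanish
because `Q` is a polynomial in `q` without constant term, hence not a root of unity.
-/

open scoped BigOperators
open Polynomial

/-- The indeterminate `q` in the field of rational functions `ℚ(q)`. -/
noncomputable def qq : RatFunc ℚ := RatFunc.X

/-- The super quantum binomial coefficient `[a; t]_{q,p}` for `a ∈ ℤ`, `t ∈ ℕ`. -/
noncomputable def sqBinom (p : ℕ) (a : ℤ) (t : ℕ) : RatFunc ℚ :=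
  (∏ s ∈ Finset.range t, (((-1) ^ p * qq) ^ (a - (s : ℤ)) - qq ^ ((s : ℤ) - a))) /
    (∏ s ∈ Finset.range t, (((-1) ^ p * qq) ^ ((s : ℤ) + 1) - qq ^ (-((s : ℤ) + 1))))

open Finset

lemma Nat.choose_two_succ (n : ℕ) : (n + 1).choose 2 = n.choose 2 + n := by
  rw [Nat.choose_succ_succ', Nat.choose_one_right, add_comm]

section GaussBinom

variable {K : Type*} [Field K]

/-- The Gaussian binomial coefficient `[a choose t]_Q`; the truncated subtraction `a - s` makes
it vanish for `t > a`, through the factor `s = a`. -/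
noncomputable def gaussBinom (Q : K) (a t : ℕ) : K :=
  (∏ s ∈ range t, (Q ^ (a - s) - 1)) / ∏ s ∈ range t, (Q ^ (s + 1) - 1)

@[simp]
lemma gaussBinom_zero_right (Q : K) (a : ℕ) : gaussBinom Q a 0 = 1 := by
  simp [gaussBinom]

lemma gaussBinom_succ_right (Q : K) (a t : ℕ) :
    gaussBinom Q a (t + 1) = gaussBinom Q a t * ((Q ^ (a - t) - 1) / (Q ^ (t + 1) - 1)) := by
  rw [gaussBinom, gaussBinom, prod_range_succ, prod_range_succ, mul_div_mul_comm]

lemma gaussBinom_succ_succ_eq_div_mul (Q : K) (a t : ℕ) :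
    gaussBinom Q (a + 1) (t + 1) = (Q ^ (a + 1) - 1) / (Q ^ (t + 1) - 1) * gaussBinom Q a t := by
  rw [gaussBinom, gaussBinom, prod_range_succ', prod_range_succ, mul_comm, mul_div_mul_comm]
  simp only [Nat.add_sub_add_right, Nat.sub_zero]
  ring

lemma gaussBinom_eq_zero_of_lt (Q : K) {a t : ℕ} (h : a < t) : gaussBinom Q a t = 0 := by
  rw [gaussBinom, prod_eq_zero (mem_range.mpr h) (by simp), zero_div]

lemma gaussBinom_succ_succ {Q : K} (hQ : ∀ k : ℕ, Q ^ (k + 1) ≠ 1) {a t : ℕ} (ht : t ≤ a) :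
    gaussBinom Q (a + 1) (t + 1) = gaussBinom Q a (t + 1) + Q ^ (a - t) * gaussBinom Q a t := by
  have hden : Q ^ (t + 1) - 1 ≠ 0 := sub_ne_zero.mpr (hQ t)
  have hpow : Q ^ (a - t) * Q ^ (t + 1) = Q ^ (a + 1) := by
    rw [← pow_add]; congr 1; omega
  rw [gaussBinom_succ_succ_eq_div_mul, gaussBinom_succ_right, ← hpow]
  field_simp
  ring

/-- The `q`-binomial theorem (Rothe). -/
theorem prod_one_add_C_pow_mul_X {Q : K} (hQ : ∀ k : ℕ, Q ^ (k + 1) ≠ 1) (a : ℕ) :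
    ∏ j ∈ range a, (1 + C (Q ^ j) * X) =
      ∑ t ∈ range (a + 1), C (Q ^ t.choose 2 * gaussBinom Q a t) * X ^ t := by
  induction a with
  | zero => simp
  | succ a ih =>
    have hcoeff : ∀ t ∈ range (a + 1),
        C (Q ^ (t + 1).choose 2 * gaussBinom Q (a + 1) (t + 1)) * X ^ (t + 1) =
          C (Q ^ (t + 1).choose 2 * gaussBinom Q a (t + 1)) * X ^ (t + 1) +
            C (Q ^ t.choose 2 * gaussBinom Q a t) * X ^ t * (C (Q ^ a) * X) := by
      intro t ht
      have ht : t ≤ a := Nat.lt_succ_iff.mp (mem_range.mp ht)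
      have hexp : Q ^ (t + 1).choose 2 * Q ^ (a - t) = Q ^ a * Q ^ t.choose 2 := by
        rw [← pow_add, ← pow_add, Nat.choose_two_succ]; congr 1; omega
      rw [gaussBinom_succ_succ hQ ht, mul_add, ← mul_assoc, hexp]
      simp only [map_add, map_mul, map_pow]
      ring
    have hshift : ∑ t ∈ range (a + 1), C (Q ^ (t + 1).choose 2 * gaussBinom Q a (t + 1)) *
        X ^ (t + 1) + C (Q ^ (0 : ℕ).choose 2 * gaussBinom Q (a + 1) 0) * X ^ 0 =
          ∑ t ∈ range (a + 1), C (Q ^ t.choose 2 * gaussBinom Q a t) * X ^ t := by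
      rw [sum_range_succ, gaussBinom_eq_zero_of_lt Q (Nat.lt_succ_self a), sum_range_succ' _ a]
      simp
    rw [prod_range_succ, ih, sum_range_succ' _ (a + 1), sum_congr rfl hcoeff, sum_add_distrib,
      ← sum_mul, add_right_comm, hshift]
    ring

lemma zpow_sub_zpow_neg_eq {u : K} (hu : u ≠ 0) (ε : K) (m : ℤ) :
    (ε * u) ^ m - u ^ (-m) = u ^ (-m) * ((ε * u ^ 2) ^ m - 1) := by
  rw [mul_sub, mul_one, mul_zpow, mul_zpow, ← zpow_natCast u 2, ← zpow_mul, mul_left_comm,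
    ← zpow_add₀ hu]
  ring_nf

lemma prod_div_prod_eq_zpow_mul_gaussBinom {u : K} (hu : u ≠ 0) (ε : K) {a t : ℕ} (ht : t ≤ a) :
    (∏ s ∈ range t, ((ε * u) ^ ((a : ℤ) - s) - u ^ ((s : ℤ) - a))) /
        ∏ s ∈ range t, ((ε * u) ^ ((s : ℤ) + 1) - u ^ (-((s : ℤ) + 1))) =
      u ^ (2 * (t.choose 2 : ℤ) - t * (a - 1)) * gaussBinom (ε * u ^ 2) a t := by
  induction t with
  | zero => simp
  | succ t ih =>
    have hnum : (ε * u) ^ ((a : ℤ) - t) - u ^ ((t : ℤ) - a) =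
        u ^ (-((a - t : ℕ) : ℤ)) * ((ε * u ^ 2) ^ (a - t) - 1) := by
      rw [← zpow_natCast (ε * u ^ 2), ← zpow_sub_zpow_neg_eq hu, Nat.cast_sub (by omega), neg_sub]
    have hden : (ε * u) ^ ((t : ℤ) + 1) - u ^ (-((t : ℤ) + 1)) =
        u ^ (-((t + 1 : ℕ) : ℤ)) * ((ε * u ^ 2) ^ (t + 1) - 1) := by
      rw [← zpow_natCast (ε * u ^ 2), ← zpow_sub_zpow_neg_eq hu, Nat.cast_succ]
    have hexp : 2 * ((t + 1).choose 2 : ℤ) - (t + 1 : ℕ) * (a - 1) =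
        2 * (t.choose 2 : ℤ) - t * (a - 1) + (-((a - t : ℕ) : ℤ) - -((t + 1 : ℕ) : ℤ)) := by
      rw [Nat.choose_two_succ]
      push_cast [Nat.cast_sub (show t ≤ a by omega)]
      ring
    rw [prod_range_succ, prod_range_succ, mul_div_mul_comm, ih (by omega), hnum, hden,
      mul_div_mul_comm, ← zpow_sub₀ hu, gaussBinom_succ_right, hexp, zpow_add₀ hu]
    ring

end GaussBinom

lemma RatFunc.algebraMap_pow_succ_ne_one {K : Type*} [Field K] {P : K[X]} (hP : P.eval 0 = 0)
    (n : ℕ) : algebraMap K[X] (RatFunc K) P ^ (n + 1) ≠ 1 := by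
  rw [← map_pow, ← map_one (algebraMap K[X] (RatFunc K)), (RatFunc.algebraMap_injective K).ne_iff]
  intro h
  simpa [hP] using congrArg (Polynomial.eval 0) h

theorem prod_one_add_eq_sum_sqBinom_general (p : ℕ) (a : ℕ) :
    ∏ j ∈ Finset.range a, (1 + C (((-1) ^ p * qq ^ 2) ^ j) * X) =
      ∑ t ∈ Finset.range (a + 1),
        C ((-1 : RatFunc ℚ) ^ (p * (t * (t - 1) / 2)) * qq ^ ((t : ℤ) * ((a : ℤ) - 1)) *
            sqBinom p (a : ℤ) t) * X ^ t := by
  have hqq : qq ≠ 0 := RatFunc.X_ne_zero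
  have hQ : ∀ k : ℕ, ((-1 : RatFunc ℚ) ^ p * qq ^ 2) ^ (k + 1) ≠ 1 := by
    have hP : ((-1) ^ p * X ^ 2 : ℚ[X]).eval 0 = 0 := by simp
    simpa [qq] using RatFunc.algebraMap_pow_succ_ne_one hP
  rw [prod_one_add_C_pow_mul_X hQ]
  refine sum_congr rfl fun t ht => ?_
  have hcoeff : qq ^ ((t : ℤ) * ((a : ℤ) - 1)) * qq ^ (2 * (t.choose 2 : ℤ) - t * (a - 1)) =
      (qq ^ 2) ^ t.choose 2 := by
    rw [← zpow_add₀ hqq, add_sub_cancel, zpow_mul, zpow_natCast, zpow_ofNat]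
  rw [sqBinom, prod_div_prod_eq_zpow_mul_gaussBinom hqq _ (Nat.lt_succ_iff.mp (mem_range.mp ht)),
    mul_assoc, ← mul_assoc (qq ^ _), hcoeff, ← mul_assoc, ← Nat.choose_two_right, pow_mul,
    ← mul_pow]

/-- Gaussian binomial expansion of the finite product
`∏_{j=0}^{a-1} (1 + ((-1)^p q²)^j z)` in `ℚ(q)[z]`. -/
theorem prod_one_add_eq_sum_sqBinom (p : ℕ) (hp : p = 0 ∨ p = 1) (a : ℕ) :
    ∏ j ∈ Finset.range a, (1 + C (((-1) ^ p * qq ^ 2) ^ j) * X) =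
      ∑ t ∈ Finset.range (a + 1),
        C ((-1 : RatFunc ℚ) ^ (p * (t * (t - 1) / 2)) * qq ^ ((t : ℤ) * ((a : ℤ) - 1)) *
            sqBinom p (a : ℤ) t) * X ^ t :=
  prod_one_add_eq_sum_sqBinom_general p a
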